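/- Let μ ≥ 2 be an integer and let (s_0,...,s_{n-1}) ∈ N^n with s_0 = 1 be such that every nonzero z ∈ Z^n with ∑_{i<n} s_i z_i = 0 satisfies ⟨z,z⟩ ≥ μ. Then there exists a positive integer s_n with s_n ≤ 1 + √(μ−2)·(μ−1+n/4)^{n/2}·π^{n/2}/(n/2)! such that every nonzero z ∈ Z^{n+1} with ∑_{i≤n} s_i z_i = 0 satisfies ⟨z,z⟩ ≥ μ. -/

import Mathlib

/-!
If the extended weight vector `(s, t)` has a short kernel vector `(y, k)`, i.e. one with
`|y|² + k² ≤ μ - 1`, then `k ≠ 0` and `y ≠ 0` by the hypothesis on `s`, hence `|y|² ≤ μ - 2` and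
`k² ≤ μ - 2`; after a sign change `k > 0`, so `⟨s, y⟩ < 0` and `t = -⟨s, y⟩ / k`. Each short `y`
with `⟨s, y⟩ < 0` thus rules out at most `√(μ - 2)` values of `t`, and some `t` at most one more
than the number of ruled-out values is admissible.

The short vectors are counted by volume. Around each lattice point `z`, the half of the unit cube
lying on the origin side of the hyperplane through `z` orthogonal to `z` has volume at least `1/2`
and, since `⟨z, x - z⟩ ≤ 0` on it, lies in the ball of radius `√(|z|² + n/4)`. These half-cubes
are disjoint, so there are at most twice the volume of that ball many lattice points of squared
norm at most `R`; the factor `2` is absorbed because `y` and `-y` are both counted.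
-/

open MeasureTheory Finset Real

namespace LatticePointCount

variable {ι : Type*} [Fintype ι]

/-- `Metric.ball` on `ι → ℝ` is for the sup metric: this is the open unit cube around `z`, cut
by the hyperplane through `z` orthogonal to `z`, on the side of the origin. -/
def halfCube (z : ι → ℝ) : Set (ι → ℝ) :=
  Metric.ball z 2⁻¹ ∩ {x | ∑ i, z i * (x i - z i) ≤ 0}

lemma measurableSet_halfCube (z : ι → ℝ) : MeasurableSet (halfCube z) :=
  measurableSet_ball.inter <| measurableSet_le (by fun_prop) measurable_const

lemma one_le_two_mul_volume_halfCube (z : ι → ℝ) : 1 ≤ 2 * volume (halfCube z) := by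
  set A : Set (ι → ℝ) := Metric.ball 0 2⁻¹ ∩ {u | ∑ i, z i * u i ≤ 0}
  have h_translate : halfCube z = (· + -z) ⁻¹' A := by
    ext x
    simp [halfCube, A, dist_eq_norm, sub_eq_add_neg]
  have h_cover : Metric.ball (0 : ι → ℝ) 2⁻¹ ⊆ A ∪ Neg.neg ⁻¹' A := by
    intro u hu
    rcases le_total (∑ i, z i * u i) 0 with h | h
    · exact Or.inl ⟨hu, h⟩
    · refine Or.inr ⟨by simpa using hu, ?_⟩
      simpa [Finset.sum_neg_distrib] using h
  calc (1 : ENNReal) = volume (Metric.ball (0 : ι → ℝ) 2⁻¹) := by simp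
    _ ≤ volume A + volume (Neg.neg ⁻¹' A) := (measure_mono h_cover).trans (measure_union_le _ _)
    _ = 2 * volume (halfCube z) := by
      rw [Measure.measure_preimage_neg, h_translate, measure_preimage_add_right, two_mul]

lemma halfCube_subset (z : ι → ℝ) :
    halfCube z ⊆ {x | ∑ i, x i ^ 2 ≤ ∑ i, z i ^ 2 + Fintype.card ι / 4} := by
  rintro x ⟨hx_ball, hx_side⟩
  have h_coord : ∀ i, (x i - z i) ^ 2 ≤ 4⁻¹ := fun i => by
    have := (dist_pi_lt_iff (by norm_num)).1 (Metric.mem_ball.1 hx_ball) i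
    rw [Real.dist_eq] at this
    nlinarith [abs_nonneg (x i - z i), sq_abs (x i - z i)]
  calc ∑ i, x i ^ 2
      = ∑ i, z i ^ 2 + 2 * ∑ i, z i * (x i - z i) + ∑ i, (x i - z i) ^ 2 := by
        rw [Finset.mul_sum, ← Finset.sum_add_distrib, ← Finset.sum_add_distrib]
        exact Finset.sum_congr rfl fun i _ => by ring
    _ ≤ ∑ i, z i ^ 2 + 2 * 0 + ∑ _i : ι, (4 : ℝ)⁻¹ := by
        gcongr with i
        · exact hx_side
        · exact h_coord i
    _ = ∑ i, z i ^ 2 + Fintype.card ι / 4 := by simp [div_eq_mul_inv]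

lemma disjoint_halfCube {z z' : ι → ℤ} (hne : z ≠ z') :
    Disjoint (halfCube fun i => (z i : ℝ)) (halfCube fun i => (z' i : ℝ)) := by
  refine Set.disjoint_left.2 fun x hx hx' => hne (funext fun i => by_contra fun hi => ?_)
  have h₁ := (dist_pi_lt_iff (by norm_num)).1 (Metric.mem_ball.1 hx.1) i
  have h₂ := (dist_pi_lt_iff (by norm_num)).1 (Metric.mem_ball.1 hx'.1) i
  have h_far : 1 ≤ dist (z i : ℝ) (z' i) := by
    rw [Int.dist_cast_real]
    exact Int.pairwise_one_le_dist hi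
  linarith [dist_triangle_left (z i : ℝ) (z' i) (x i)]

lemma setOf_sum_sq_le_subset_closedBall (c : ℝ) :
    {x : ι → ℝ | ∑ i, x i ^ 2 ≤ c} ⊆
      WithLp.toLp 2 ⁻¹' Metric.closedBall (0 : EuclideanSpace ℝ ι) √c := by
  intro x hx
  simpa [EuclideanSpace.norm_eq] using Real.sqrt_le_sqrt hx

theorem card_le_two_mul_volume_closedBall (S : Finset (ι → ℤ)) (R : ℝ)
    (hS : ∀ z ∈ S, ∑ i, (z i : ℝ) ^ 2 ≤ R) :
    (#S : ENNReal) ≤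
      2 * volume (Metric.closedBall (0 : EuclideanSpace ℝ ι) √(R + Fintype.card ι / 4)) := by
  set H : (ι → ℤ) → Set (ι → ℝ) := fun z => halfCube fun i => (z i : ℝ)
  have h_union : (⋃ z ∈ S, H z) ⊆ WithLp.toLp 2 ⁻¹'
      Metric.closedBall (0 : EuclideanSpace ℝ ι) √(R + Fintype.card ι / 4) := by
    refine Set.iUnion₂_subset fun z hz => (halfCube_subset _).trans <|
      (Set.ofPred_subset_ofPred.2 fun x hx => ?_).trans (setOf_sum_sq_le_subset_closedBall _)
    exact hx.trans (by linarith [hS z hz])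
  calc (#S : ENNReal) = ∑ _z ∈ S, 1 := by simp
    _ ≤ ∑ z ∈ S, 2 * volume (H z) := sum_le_sum fun z _ => one_le_two_mul_volume_halfCube _
    _ = 2 * volume (⋃ z ∈ S, H z) := by
      rw [← mul_sum, measure_biUnion_finset (fun z _ z' _ hne => disjoint_halfCube hne)
        fun z _ => measurableSet_halfCube _]
    _ ≤ _ := by
      rw [← (PiLp.volume_preserving_toLp ι).measure_preimage
        measurableSet_closedBall.nullMeasurableSet]
      gcongr

theorem card_le_of_sum_sq_le [Nonempty ι] (S : Finset (ι → ℤ)) (R : ℝ)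
    (hS : ∀ z ∈ S, ∑ i, (z i : ℝ) ^ 2 ≤ R) :
    (#S : ℝ) ≤ 2 * (√(R + Fintype.card ι / 4) ^ Fintype.card ι *
      (√π ^ Fintype.card ι / Gamma (Fintype.card ι / 2 + 1))) := by
  have h := card_le_two_mul_volume_closedBall S R hS
  rw [EuclideanSpace.volume_closedBall, ← ENNReal.ofReal_pow (sqrt_nonneg _),
    ← ENNReal.ofReal_mul (by positivity), ← ENNReal.ofReal_ofNat 2,
    ← ENNReal.ofReal_mul (by norm_num), ← ENNReal.ofReal_natCast] at h
  exact (ENNReal.ofReal_le_ofReal_iff (by positivity)).1 h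

end LatticePointCount

namespace IntegerWeights

variable {ι : Type*} [Fintype ι] [DecidableEq ι]

noncomputable def negShortVectors (s : ι → ℤ) (m : ℤ) : Finset (ι → ℤ) :=
  (Fintype.piFinset fun _ => Icc (-m) m).filter fun w => ∑ i, s i * w i < 0 ∧ ∑ i, w i ^ 2 ≤ m

lemma mem_negShortVectors {s : ι → ℤ} {m : ℤ} {w : ι → ℤ} :
    w ∈ negShortVectors s m ↔ ∑ i, s i * w i < 0 ∧ ∑ i, w i ^ 2 ≤ m := by
  simp only [negShortVectors, mem_filter, Fintype.mem_piFinset, mem_Icc, and_iff_right_iff_imp]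
  rintro ⟨-, hw⟩ i
  have h_sq : w i ^ 2 ≤ m := (single_le_sum (fun j _ => sq_nonneg (w j)) (mem_univ i)).trans hw
  constructor <;> linarith [Int.le_self_sq (w i), Int.le_self_sq (-w i), neg_sq (w i)]

/-- Contains every `t > 0` for which some `w` and `l > 0` with `∑ i, w i ^ 2 ≤ m` and `l ^ 2 ≤ m`
satisfy `∑ i, s i * w i + t * l = 0`. -/
noncomputable def badValues (s : ι → ℤ) (m : ℤ) : Finset ℤ :=
  (negShortVectors s m ×ˢ Icc 1 ⌊√(m : ℝ)⌋).image fun p => -(∑ i, s i * p.1 i) / p.2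

lemma card_badValues_le (s : ι → ℤ) (m : ℤ) :
    (#(badValues s m) : ℝ) ≤ #(negShortVectors s m) * √(m : ℝ) := by
  have h_card : #(badValues s m) ≤ #(negShortVectors s m) * ⌊√(m : ℝ)⌋₊ := by
    calc #(badValues s m) ≤ #(negShortVectors s m ×ˢ Icc 1 ⌊√(m : ℝ)⌋) := card_image_le
      _ = #(negShortVectors s m) * ⌊√(m : ℝ)⌋₊ := by
        rw [card_product, Int.card_Icc, add_sub_cancel_right, Int.floor_toNat]
  calc (#(badValues s m) : ℝ) ≤ #(negShortVectors s m) * ⌊√(m : ℝ)⌋₊ := by exact_mod_cast h_card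
    _ ≤ #(negShortVectors s m) * √(m : ℝ) := by gcongr; exact Nat.floor_le (sqrt_nonneg _)

lemma mem_badValues {s : ι → ℤ} {m t l : ℤ} {w : ι → ℤ} (ht : 0 < t) (hl : 0 < l)
    (hw : ∑ i, w i ^ 2 ≤ m) (hl_sq : l ^ 2 ≤ m) (h : ∑ i, s i * w i + t * l = 0) :
    t ∈ badValues s m := by
  have hm : (0 : ℝ) ≤ m := by exact_mod_cast (sq_nonneg l).trans hl_sq
  have hl_le : l ≤ ⌊√(m : ℝ)⌋ :=
    Int.le_floor.2 <| (Real.le_sqrt (by positivity) hm).2 (by exact_mod_cast hl_sq)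
  refine mem_image.2 ⟨(w, l), mem_product.2 ⟨mem_negShortVectors.2 ⟨by nlinarith, hw⟩,
    mem_Icc.2 ⟨hl, hl_le⟩⟩, ?_⟩
  rw [show -(∑ i, s i * w i) = t * l by linarith, Int.mul_ediv_cancel _ hl.ne']

theorem le_sum_sq_add_sq_of_notMem_badValues {s : ι → ℤ} {μ t : ℤ}
    (hmin : ∀ y : ι → ℤ, y ≠ 0 → ∑ i, s i * y i = 0 → μ ≤ ∑ i, y i ^ 2)
    (ht : 0 < t) (ht_bad : t ∉ badValues s (μ - 2)) {y : ι → ℤ} {k : ℤ} (hyk : y ≠ 0 ∨ k ≠ 0)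
    (h : ∑ i, s i * y i + t * k = 0) : μ ≤ ∑ i, y i ^ 2 + k ^ 2 := by
  by_contra! h_short
  have hk : k ≠ 0 := by
    rintro rfl
    have := hmin y (hyk.resolve_right (not_not.2 rfl)) (by simpa using h)
    linarith
  have hy : y ≠ 0 := by
    rintro rfl
    simp only [Pi.zero_apply, mul_zero, sum_const_zero, zero_add, mul_eq_zero] at h
    exact h.elim ht.ne' hk
  have hy_sq_pos : 0 < ∑ i, y i ^ 2 := by
    obtain ⟨i, hi⟩ := Function.ne_iff.1 hy
    exact sum_pos' (fun j _ => sq_nonneg (y j)) ⟨i, mem_univ i, sq_pos_of_ne_zero hi⟩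
  have hk_sq_pos : 0 < k ^ 2 := sq_pos_of_ne_zero hk
  rcases hk.lt_or_gt with hk_neg | hk_pos
  · refine ht_bad (mem_badValues (w := -y) (l := -k) ht (by linarith) ?_ ?_ ?_)
    · simp only [Pi.neg_apply, neg_sq]; linarith
    · rw [neg_sq]; linarith
    · simp only [Pi.neg_apply, mul_neg, sum_neg_distrib]; linarith
  · exact ht_bad (mem_badValues ht hk_pos (by linarith) (by linarith) h)

lemma card_negShortVectors_le [Nonempty ι] (s : ι → ℤ) (m : ℤ) :
    (#(negShortVectors s m) : ℝ) ≤ √(m + Fintype.card ι / 4) ^ Fintype.card ι *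
      (√π ^ Fintype.card ι / Gamma (Fintype.card ι / 2 + 1)) := by
  set N := negShortVectors s m
  have h_disj : Disjoint N (N.image Neg.neg) := by
    refine disjoint_left.2 fun w hw hw' => ?_
    obtain ⟨v, hv, rfl⟩ := mem_image.1 hw'
    have h₁ := (mem_negShortVectors.1 hw).1
    have h₂ := (mem_negShortVectors.1 hv).1
    simp only [Pi.neg_apply, mul_neg, sum_neg_distrib] at h₁
    linarith
  have h_short : ∀ w ∈ N ∪ N.image Neg.neg, ∑ i, (w i : ℝ) ^ 2 ≤ m := by
    intro w hw
    rcases mem_union.1 hw with hw | hw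
    · exact_mod_cast (mem_negShortVectors.1 hw).2
    · obtain ⟨v, hv, rfl⟩ := mem_image.1 hw
      have hv_short := (mem_negShortVectors.1 hv).2
      simp only [Pi.neg_apply, Int.cast_neg, neg_sq]
      exact_mod_cast hv_short
  have h_card := LatticePointCount.card_le_of_sum_sq_le _ _ h_short
  rw [card_union_of_disjoint h_disj, card_image_of_injective _ neg_injective] at h_card
  push_cast at h_card
  linarith

end IntegerWeights

open IntegerWeights

theorem stmt4 (n μ : ℕ) (hn : 1 ≤ n)
    (s : Fin n → ℕ)
    (hmin : ∀ z : Fin n → ℤ, z ≠ 0 → (∑ i, (s i : ℤ) * z i) = 0 →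
      (μ : ℤ) ≤ ∑ i, z i ^ 2) :
    ∃ sn : ℕ, 0 < sn ∧
      (sn : ℝ) ≤ 1 + Real.sqrt ((μ : ℝ) - 2) * Real.sqrt ((μ : ℝ) - 1 + n / 4) ^ n *
        Real.pi ^ ((n : ℝ) / 2) / Real.Gamma ((n : ℝ) / 2 + 1) ∧
      ∀ z : Fin (n + 1) → ℤ, z ≠ 0 →
        (∑ i, ((Fin.snoc s sn : Fin (n + 1) → ℕ) i : ℤ) * z i) = 0 →
        (μ : ℤ) ≤ ∑ i, z i ^ 2 := by
  have : Nonempty (Fin n) := ⟨⟨0, hn⟩⟩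
  set bad := badValues (fun i => (s i : ℤ)) (μ - 2)
  obtain ⟨t, ht_mem, ht_bad⟩ :=
    exists_mem_notMem_of_card_lt_card (s := bad) (t := Icc 1 (#bad + 1 : ℤ)) (by simp)
  obtain ⟨ht_pos, ht_le⟩ := mem_Icc.1 ht_mem
  lift t to ℕ using (by omega)
  refine ⟨t, by omega, ?_, fun z hz h => ?_⟩
  · set N := negShortVectors (fun i => (s i : ℤ)) (μ - 2)
    have h_bad : (#bad : ℝ) ≤ #N * √((μ : ℝ) - 2) := by
      simpa using card_badValues_le (fun i => (s i : ℤ)) (μ - 2)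
    have h_pi : √π ^ n = π ^ ((n : ℝ) / 2) := by
      rw [sqrt_eq_rpow, ← rpow_natCast, ← rpow_mul pi_pos.le, one_div_mul_eq_div]
    have h_short :
        (#N : ℝ) ≤ √((μ : ℝ) - 2 + n / 4) ^ n * (π ^ ((n : ℝ) / 2) / Gamma (n / 2 + 1)) := by
      simpa [h_pi] using card_negShortVectors_le (fun i => (s i : ℤ)) (μ - 2)
    calc (t : ℝ) ≤ #bad + 1 := by exact_mod_cast ht_le
      _ ≤ #N * √((μ : ℝ) - 2) + 1 := by linarith
      _ ≤ √((μ : ℝ) - 2 + n / 4) ^ n * (π ^ ((n : ℝ) / 2) / Gamma (n / 2 + 1)) *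
          √((μ : ℝ) - 2) + 1 := by gcongr
      _ ≤ √((μ : ℝ) - 1 + n / 4) ^ n * (π ^ ((n : ℝ) / 2) / Gamma (n / 2 + 1)) *
          √((μ : ℝ) - 2) + 1 := by gcongr; linarith
      _ = _ := by ring
  · have hyk : (fun i => z (Fin.castSucc i)) ≠ 0 ∨ z (Fin.last n) ≠ 0 := by
      by_contra! h0
      exact hz (funext fun i => Fin.lastCases h0.2 (fun j => congr_fun h0.1 j) i)
    rw [Fin.sum_univ_castSucc]
    simp only [Fin.sum_univ_castSucc, Fin.snoc_castSucc, Fin.snoc_last] at h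
    exact le_sum_sq_add_sq_of_notMem_badValues hmin (by omega) ht_bad hyk h
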